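/- For every integer n ≥ 1, every t ∈ ℝ, every f ∈ 𝒞 and every k ∈ ℕ, the seminorm p_{f,k}(e^{itH_L} (a†)^n e^{−itH_L} − e^{int} (a†)^n) tends to 0 as L → ∞; i.e., the regularized dynamics of every power of the creation operator converges in each seminorm of the physical topology τ to e^{int} (a†)^n. -/

import Mathlib

open Filter Topology
open scoped ENNReal

noncomputable section

/-- The boson Hilbert space `H = ℓ²(ℕ, ℂ)`. -/
abbrev Hb : Type := lp (fun _ : ℕ => ℂ) 2

/-- The standard orthonormal basis vectors `e n` of `H`. -/
def eb (n : ℕ) : Hb := lp.single 2 n (1 : ℂ)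

/-- The dense subspace `D` of finitely supported linear combinations of the `e n`,
modelled as finitely supported sequences. -/
abbrev Db : Type := ℕ →₀ ℂ

/-- The inclusion `D → H`. -/
def incl : Db →ₗ[ℂ] Hb := Finsupp.linearCombination ℂ eb

/-- The annihilation operator `a : D → D`, `a e₀ = 0`, `a eₙ = √n e_{n-1}`. -/
def aOp : Db →ₗ[ℂ] Db :=
  Finsupp.lsum ℂ fun n => (Real.sqrt n : ℂ) • Finsupp.lsingle (n - 1)

/-- The creation operator `a† : D → D`, `a† eₙ = √(n+1) e_{n+1}`. -/
def adOp : Db →ₗ[ℂ] Db :=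
  Finsupp.lsum ℂ fun n => (Real.sqrt (n + 1) : ℂ) • Finsupp.lsingle (n + 1)

/-- The number operator `N = a† a` on `D`. -/
def ND : Db →ₗ[ℂ] Db := adOp ∘ₗ aOp

/-- The projection `Π_l` restricted to `D`. -/
def PiD (l : ℕ) : Db →ₗ[ℂ] Db :=
  Finsupp.lsum ℂ fun n => if n = l then Finsupp.lsingle n else 0

/-- `Q_L = Σ_{l=0}^L Π_l` on `D`. -/
def QD (L : ℕ) : Db →ₗ[ℂ] Db := ∑ l ∈ Finset.range (L + 1), PiD l

/-- The orthogonal projection `Π_l` of `H` onto `ℂ e_l`. -/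
def PiH (l : ℕ) : Hb →L[ℂ] Hb := (innerSL ℂ (eb l)).smulRight (eb l)

/-- `Q_L = Σ_{l=0}^L Π_l` on `H`. -/
def QH (L : ℕ) : Hb →L[ℂ] Hb := ∑ l ∈ Finset.range (L + 1), PiH l

/-- For a linear map `T : D → H`, the bounded operator `Π_l T Π_s` on `H`
(it is `x ↦ ⟪e_s, x⟫ • Π_l (T e_s)`, of rank at most one). -/
def sandwich (T : Db →ₗ[ℂ] Hb) (l s : ℕ) : Hb →L[ℂ] Hb :=
  (innerSL ℂ (eb s)).smulRight (PiH l (T (Finsupp.single s 1)))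

/-- Membership in the set `𝒞` of positive, bounded, continuous functions on `[0,∞)`
decreasing faster than any inverse power. -/
structure IsC (f : ℝ → ℝ) : Prop where
  cont : ContinuousOn f (Set.Ici (0 : ℝ))
  bdd : ∃ B : ℝ, ∀ x ∈ Set.Ici (0 : ℝ), f x ≤ B
  pos : ∀ x ∈ Set.Ici (0 : ℝ), 0 < f x
  decay : ∀ n : ℕ, Tendsto (fun x : ℝ => x ^ n * f x) atTop (nhds 0)

/-- The seminorm `p_{f,k}(T) = Σ_{l,s} f(l) s^k ‖Π_l T Π_s‖ ∈ [0,∞]`. -/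
def semin (f : ℝ → ℝ) (k : ℕ) (T : Db →ₗ[ℂ] Hb) : ℝ≥0∞ :=
  ∑' (l : ℕ) (s : ℕ), ENNReal.ofReal (f l * (s : ℝ) ^ k * ‖sandwich T l s‖)

end

noncomputable section AuxLemmas

open scoped InnerProductSpace

lemma eb_norm (m : ℕ) : ‖eb m‖ = 1 := by
  have := lp.norm_single (p := 2) (E := fun _ : ℕ => ℂ) (by norm_num) m (1:ℂ)
  simpa [eb] using this

lemma eb_inner (l m : ℕ) : ⟪eb l, eb m⟫_ℂ = if m = l then 1 else 0 := by
  rw [eb, eb, lp.inner_single_left, lp.single_apply]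
  rcases eq_or_ne m l with h | h
  · subst h; simp
  · simp [h, Ne.symm h]

lemma eb_orthonormal : Orthonormal ℂ eb := by
  rw [orthonormal_iff_ite]
  intro i j
  rw [eb_inner]
  simp [eq_comm]

lemma incl_injective : Function.Injective incl :=
  eb_orthonormal.linearIndependent

lemma incl_single (s : ℕ) (c : ℂ) : incl (Finsupp.single s c) = c • eb s := by
  simp [incl, Finsupp.linearCombination_single]

lemma aOp_single (s : ℕ) (c : ℂ) :
    aOp (Finsupp.single s c) = (Real.sqrt s : ℂ) • Finsupp.single (s - 1) c := by
  simp [aOp, Finsupp.lsum_single]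

lemma adOp_single (s : ℕ) (c : ℂ) :
    adOp (Finsupp.single s c) = ((Real.sqrt (s + 1) : ℂ)) • Finsupp.single (s + 1) c := by
  simp [adOp, Finsupp.lsum_single]

lemma ND_single (s : ℕ) (c : ℂ) : ND (Finsupp.single s c) = (s : ℂ) • Finsupp.single s c := by
  cases s with
  | zero => simp [ND, aOp_single]
  | succ m =>
    simp only [ND, LinearMap.comp_apply, aOp_single, map_smul, Nat.add_sub_cancel,
      adOp_single, smul_smul]
    congr 1
    push_cast
    rw [← Complex.ofReal_mul, Real.mul_self_sqrt (by positivity)]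
    push_cast
    ring

lemma PiD_single (l s : ℕ) (c : ℂ) :
    PiD l (Finsupp.single s c) = if s = l then Finsupp.single s c else 0 := by
  simp only [PiD, Finsupp.lsum_single]
  split_ifs <;> simp

lemma QD_single (L s : ℕ) (c : ℂ) :
    QD L (Finsupp.single s c) = if s ≤ L then Finsupp.single s c else 0 := by
  simp only [QD, LinearMap.sum_apply, PiD_single]
  rw [Finset.sum_ite_eq]
  simp [Nat.lt_succ_iff]

/-- product of sqrt factors -/
def Cc (s n : ℕ) : ℝ := ∏ i ∈ Finset.range n, Real.sqrt ((s : ℝ) + i + 1)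

lemma Cc_nonneg (s n : ℕ) : 0 ≤ Cc s n :=
  Finset.prod_nonneg fun i _ => Real.sqrt_nonneg _

lemma adpow_single (n s : ℕ) :
    (adOp ^ n) (Finsupp.single s 1) = (Cc s n : ℂ) • Finsupp.single (s + n) 1 := by
  induction n with
  | zero => simp [Cc]
  | succ m ih =>
    have hCc : Cc s (m + 1) = Cc s m * Real.sqrt ((s + m : ℕ) + 1) := by
      rw [Cc, Finset.prod_range_succ, ← Cc]
      norm_cast
    rw [pow_succ', Module.End.mul_apply, ih, map_smul, adOp_single, smul_smul, hCc,
      Complex.ofReal_mul]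
    rfl

lemma exp_eigen (A : Hb →L[ℂ] Hb) (x : Hb) (c : ℂ) (h : A x = c • x) :
    NormedSpace.exp A x = Complex.exp c • x := by
  have hpow : ∀ m : ℕ, (A ^ m) x = c ^ m • x := by
    intro m
    induction m with
    | zero => simp
    | succ m ih =>
      rw [pow_succ', ContinuousLinearMap.mul_apply, ih, map_smul, h, smul_smul, ← pow_succ]
  have hexp : NormedSpace.exp A = ∑' m : ℕ, ((m.factorial : ℂ))⁻¹ • A ^ m := by
    rw [NormedSpace.exp_eq_tsum (𝕂 := ℂ)]
  have hsum : Summable (fun m : ℕ => ((m.factorial : ℂ))⁻¹ • A ^ m) := NormedSpace.expSeries_summable' A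
  have happ : (NormedSpace.exp A) x
      = (ContinuousLinearMap.apply ℂ Hb x) (∑' m : ℕ, ((m.factorial : ℂ))⁻¹ • A ^ m) := by
    rw [hexp]; rfl
  rw [happ, (ContinuousLinearMap.apply ℂ Hb x).map_tsum hsum]
  have h2 : ∀ m : ℕ, (ContinuousLinearMap.apply ℂ Hb x) (((m.factorial : ℂ))⁻¹ • A ^ m)
      = (((m.factorial : ℂ))⁻¹ * c ^ m) • x := by
    intro m
    simp [hpow m, smul_smul]
  have hsum2 : Summable (fun m : ℕ => ((m.factorial : ℂ))⁻¹ * c ^ m) := by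
    simpa [smul_eq_mul] using NormedSpace.expSeries_summable' (𝕂 := ℂ) c
  rw [tsum_congr h2, hsum2.tsum_smul_const]
  congr 1
  rw [Complex.exp_eq_exp_ℂ, NormedSpace.exp_eq_tsum (𝕂 := ℂ)]
  simp [smul_eq_mul]

/-- eigenvalue of `H_L` on `e s` (as a real number) -/
def muR (L s : ℕ) : ℝ := if s ≤ L then (s : ℝ) else 0

lemma HL_eb {HL : ℕ → Hb →L[ℂ] Hb}
    (hHL : ∀ (L : ℕ) (x : Db), HL L (incl x) = incl (QD L (ND (QD L x))))
    (L s : ℕ) : HL L (eb s) = (muR L s : ℂ) • eb s := by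
  have h := hHL L (Finsupp.single s 1)
  rw [QD_single] at h
  by_cases hs : s ≤ L
  · rw [if_pos hs, ND_single, map_smul, QD_single, if_pos hs, incl_single, one_smul,
      map_smul, incl_single, one_smul] at h
    rw [h, muR, if_pos hs]
    rw [Complex.ofReal_natCast]
  · rw [if_neg hs, map_zero, map_zero, map_zero, incl_single, one_smul] at h
    rw [h, muR, if_neg hs]
    simp

lemma smul_HL_eb {HL : ℕ → Hb →L[ℂ] Hb}
    (hHL : ∀ (L : ℕ) (x : Db), HL L (incl x) = incl (QD L (ND (QD L x))))
    (c : ℂ) (L s : ℕ) : (c • HL L) (eb s) = (c * (muR L s : ℂ)) • eb s := by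
  rw [ContinuousLinearMap.smul_apply, HL_eb hHL, smul_smul]

lemma exp_smul_HL_eb {HL : ℕ → Hb →L[ℂ] Hb}
    (hHL : ∀ (L : ℕ) (x : Db), HL L (incl x) = incl (QD L (ND (QD L x))))
    (c : ℂ) (L s : ℕ) :
    NormedSpace.exp (c • HL L) (eb s) = Complex.exp (c * (muR L s : ℂ)) • eb s :=
  exp_eigen _ _ _ (smul_HL_eb hHL c L s)

lemma V_single {t : ℝ} {HL : ℕ → Hb →L[ℂ] Hb}
    (hHL : ∀ (L : ℕ) (x : Db), HL L (incl x) = incl (QD L (ND (QD L x))))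
    {V : ℕ → Db →ₗ[ℂ] Db}
    (hV : ∀ (L : ℕ) (x : Db),
      incl (V L x) = NormedSpace.exp ((-((t : ℂ) * Complex.I)) • HL L) (incl x))
    (L s : ℕ) :
    V L (Finsupp.single s 1)
      = Complex.exp (-((t : ℂ) * Complex.I) * (muR L s : ℂ)) • Finsupp.single s 1 := by
  apply incl_injective
  rw [map_smul, hV L, incl_single, one_smul]
  exact exp_smul_HL_eb hHL _ L s

lemma sandwich_norm_of_apply (T : Db →ₗ[ℂ] Hb) (l s m : ℕ) (z : ℂ)
    (hT : T (Finsupp.single s 1) = z • eb m) :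
    ‖sandwich T l s‖ = if m = l then ‖z‖ else 0 := by
  have hPiH : PiH l (z • eb m) = (if m = l then z else 0) • eb l := by
    rw [PiH]
    rw [ContinuousLinearMap.smulRight_apply, innerSL_apply_apply, inner_smul_right, eb_inner]
    split_ifs <;> simp
  rw [sandwich, hT, hPiH, ContinuousLinearMap.norm_smulRight_apply, innerSL_apply_norm,
    eb_norm, norm_smul, eb_norm]
  split_ifs <;> simp

lemma norm_exp_of_re_zero (z : ℂ) (h : z.re = 0) : ‖Complex.exp z‖ = 1 := by
  rw [Complex.norm_exp, h, Real.exp_zero]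

lemma Cc_le (s n : ℕ) : Cc s n ≤ ((s + n : ℕ) : ℝ) ^ n := by
  rw [Cc]
  calc ∏ i ∈ Finset.range n, Real.sqrt ((s : ℝ) + i + 1)
      ≤ ∏ _i ∈ Finset.range n, ((s + n : ℕ) : ℝ) := by
        refine Finset.prod_le_prod (fun i _ => Real.sqrt_nonneg _) (fun i hi => ?_)
        have h1 : ((s : ℝ) + i + 1) ≤ ((s + n : ℕ) : ℝ) := by
          have : (i : ℝ) + 1 ≤ (n : ℝ) := by
            exact_mod_cast Nat.succ_le_of_lt (Finset.mem_range.mp hi)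
          push_cast
          linarith
        calc Real.sqrt ((s : ℝ) + i + 1) ≤ Real.sqrt (((s : ℝ) + i + 1) * ((s : ℝ) + i + 1)) := by
              apply Real.sqrt_le_sqrt
              nlinarith [Nat.cast_nonneg (α := ℝ) s, Nat.cast_nonneg (α := ℝ) i]
          _ = (s : ℝ) + i + 1 := Real.sqrt_mul_self (by positivity)
          _ ≤ _ := h1
    _ = ((s + n : ℕ) : ℝ) ^ n := by rw [Finset.prod_const, Finset.card_range]

/-- the phase difference -/
def wph (t : ℝ) (n L s : ℕ) : ℂ :=
  Complex.exp ((t : ℂ) * Complex.I * (muR L (s + n) : ℂ))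
    * Complex.exp (-((t : ℂ) * Complex.I) * (muR L s : ℂ))
    - Complex.exp ((n : ℂ) * (t : ℂ) * Complex.I)

lemma wph_norm_le (t : ℝ) (n L s : ℕ) : ‖wph t n L s‖ ≤ 2 := by
  have h1 : ‖Complex.exp ((t : ℂ) * Complex.I * (muR L (s + n) : ℂ))‖ = 1 :=
    norm_exp_of_re_zero _ (by simp)
  have h2 : ‖Complex.exp (-((t : ℂ) * Complex.I) * (muR L s : ℂ))‖ = 1 :=
    norm_exp_of_re_zero _ (by simp)
  have h3 : ‖Complex.exp ((n : ℂ) * (t : ℂ) * Complex.I)‖ = 1 :=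
    norm_exp_of_re_zero _ (by simp)
  calc ‖wph t n L s‖ ≤ ‖Complex.exp ((t : ℂ) * Complex.I * (muR L (s + n) : ℂ))
        * Complex.exp (-((t : ℂ) * Complex.I) * (muR L s : ℂ))‖
        + ‖Complex.exp ((n : ℂ) * (t : ℂ) * Complex.I)‖ := norm_sub_le _ _
    _ ≤ 2 := by rw [norm_mul, h1, h2, h3]; norm_num

lemma wph_eq_zero (t : ℝ) (n L s : ℕ) (h : s + n ≤ L) : wph t n L s = 0 := by
  rw [wph, muR, if_pos h, muR, if_pos (le_trans (Nat.le_add_right s n) h),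
    ← Complex.exp_add, sub_eq_zero]
  congr 1
  push_cast
  ring

lemma T_single {t : ℝ} {HL : ℕ → Hb →L[ℂ] Hb}
    (hHL : ∀ (L : ℕ) (x : Db), HL L (incl x) = incl (QD L (ND (QD L x))))
    {V : ℕ → Db →ₗ[ℂ] Db}
    (hV : ∀ (L : ℕ) (x : Db),
      incl (V L x) = NormedSpace.exp ((-((t : ℂ) * Complex.I)) • HL L) (incl x))
    (n L s : ℕ) :
    (((NormedSpace.exp (((t : ℂ) * Complex.I) • HL L)).toLinearMap
        ∘ₗ incl ∘ₗ (adOp ^ n) ∘ₗ V L)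
      - Complex.exp ((n : ℂ) * (t : ℂ) * Complex.I) • (incl ∘ₗ (adOp ^ n)))
      (Finsupp.single s 1)
    = ((Cc s n : ℂ) * wph t n L s) • eb (s + n) := by
  rw [LinearMap.sub_apply, LinearMap.comp_apply, LinearMap.comp_apply, LinearMap.comp_apply,
    LinearMap.smul_apply, LinearMap.comp_apply, V_single hHL hV, map_smul, adpow_single,
    smul_smul, map_smul, incl_single, one_smul, ContinuousLinearMap.coe_coe, map_smul,
    exp_smul_HL_eb hHL, map_smul, incl_single, one_smul, smul_smul, smul_smul,
    ← sub_smul, wph]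
  congr 1
  ring

end AuxLemmas

noncomputable section

/-- for every `n ≥ 1`, the regularized dynamics `α_L^t((a†)ⁿ)` converges, in every
seminorm `p_{f,k}` of the physical topology, to `e^{int} (a†)ⁿ`. `HL L` is the bounded extension
of `H_L = Q_L N Q_L` and `V L` is the restriction of `e^{-itH_L}` to `D`. -/
theorem stmt2 (n : ℕ) (hn : 1 ≤ n) (t : ℝ) (f : ℝ → ℝ) (hf : IsC f) (k : ℕ)
    (HL : ℕ → Hb →L[ℂ] Hb)
    (hHL : ∀ (L : ℕ) (x : Db), HL L (incl x) = incl (QD L (ND (QD L x))))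
    (V : ℕ → Db →ₗ[ℂ] Db)
    (hV : ∀ (L : ℕ) (x : Db),
      incl (V L x) = NormedSpace.exp ((-((t : ℂ) * Complex.I)) • HL L) (incl x)) :
    Tendsto
      (fun L : ℕ =>
        semin f k
          (((NormedSpace.exp (((t : ℂ) * Complex.I) • HL L)).toLinearMap
              ∘ₗ incl ∘ₗ (adOp ^ n) ∘ₗ V L)
            - Complex.exp ((n : ℂ) * (t : ℂ) * Complex.I) • (incl ∘ₗ (adOp ^ n))))
      atTop (nhds 0) := by
  classical
  set T : ℕ → Db →ₗ[ℂ] Hb := fun L =>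
    (((NormedSpace.exp (((t : ℂ) * Complex.I) • HL L)).toLinearMap
        ∘ₗ incl ∘ₗ (adOp ^ n) ∘ₗ V L)
      - Complex.exp ((n : ℂ) * (t : ℂ) * Complex.I) • (incl ∘ₗ (adOp ^ n))) with hTdef
  -- norms of the sandwiches
  have hnorm : ∀ L l s : ℕ,
      ‖sandwich (T L) l s‖ = if s + n = l then Cc s n * ‖wph t n L s‖ else 0 := by
    intro L l s
    rw [sandwich_norm_of_apply (T L) l s (s + n) _ (T_single hHL hV n L s), norm_mul,
      Complex.norm_real, Real.norm_of_nonneg (Cc_nonneg s n)]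
  -- the dominating sequence
  set GE : ℕ → ℝ≥0∞ := fun s =>
    ENNReal.ofReal (f ((s + n : ℕ) : ℝ) * (s : ℝ) ^ k * (2 * Cc s n)) with hGEdef
  have hfpos : ∀ m : ℕ, 0 < f (m : ℝ) := fun m => hf.pos _ (Set.mem_Ici.mpr (by positivity))
  -- termwise bound
  have hterm : ∀ L l s : ℕ,
      ENNReal.ofReal (f l * (s : ℝ) ^ k * ‖sandwich (T L) l s‖)
        ≤ if l = s + n then (if L < s + n then GE s else 0) else 0 := by
    intro L l s
    by_cases hl : l = s + n
    · subst hl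
      rw [if_pos rfl, hnorm, if_pos rfl]
      by_cases hL : L < s + n
      · rw [if_pos hL, hGEdef]
        apply ENNReal.ofReal_le_ofReal
        apply mul_le_mul_of_nonneg_left _ (mul_nonneg (hfpos (s + n)).le (by positivity))
        calc Cc s n * ‖wph t n L s‖ ≤ Cc s n * 2 :=
              mul_le_mul_of_nonneg_left (wph_norm_le t n L s) (Cc_nonneg s n)
          _ = 2 * Cc s n := by ring
      · rw [if_neg hL, wph_eq_zero t n L s (not_lt.mp hL)]
        simp
    · rw [if_neg hl, hnorm, if_neg (fun h => hl h.symm)]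
      simp
  -- bound the seminorm by a tail sum
  have hbound : ∀ L : ℕ, semin f k (T L) ≤ ∑' j : ℕ, GE (j + (L + 1 - n)) := by
    intro L
    rw [semin]
    calc ∑' (l : ℕ) (s : ℕ), ENNReal.ofReal (f l * (s : ℝ) ^ k * ‖sandwich (T L) l s‖)
        ≤ ∑' (l : ℕ) (s : ℕ), if l = s + n then (if L < s + n then GE s else 0) else 0 :=
          ENNReal.tsum_le_tsum fun l => ENNReal.tsum_le_tsum fun s => hterm L l s
      _ = ∑' (s : ℕ) (l : ℕ), if l = s + n then (if L < s + n then GE s else 0) else 0 :=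
          ENNReal.tsum_comm
      _ = ∑' (s : ℕ), (if L < s + n then GE s else 0) := by
          exact tsum_congr fun s => tsum_ite_eq (s + n) _
      _ = ∑' (j : ℕ), (if L < (j + (L + 1 - n)) + n then GE (j + (L + 1 - n)) else 0) := by
          refine (Function.Injective.tsum_eq (g := fun j : ℕ => j + (L + 1 - n))
            (add_left_injective _) ?_).symm
          intro x hx
          rcases Nat.lt_or_ge x (L + 1 - n) with hlt | hge
          · exfalso
            rw [Function.mem_support] at hx
            apply hx
            rw [if_neg]
            omega
          · exact ⟨x - (L + 1 - n), Nat.sub_add_cancel hge⟩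
      _ ≤ ∑' (j : ℕ), GE (j + (L + 1 - n)) := by
          refine ENNReal.tsum_le_tsum fun j => ?_
          split_ifs <;> simp
  -- summability of the dominating sequence
  have hu : ∀ s : ℕ, 0 ≤ f ((s + n : ℕ) : ℝ) * (s : ℝ) ^ k * (2 * Cc s n) := by
    intro s
    have := (hfpos (s + n)).le
    have := Cc_nonneg s n
    positivity
  have husum : Summable (fun s : ℕ => f ((s + n : ℕ) : ℝ) * (s : ℝ) ^ k * (2 * Cc s n)) := by
    have hdec := hf.decay (k + n + 2)
    have hev := (NormedAddCommGroup.tendsto_nhds_zero.mp hdec) 1 one_pos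
    rw [eventually_atTop] at hev
    obtain ⟨M, hM⟩ := hev
    set s₀ : ℕ := ⌈M⌉₊ + 1 with hs₀
    have hkey : ∀ j : ℕ, f (((j + s₀) + n : ℕ) : ℝ) * ((j + s₀ : ℕ) : ℝ) ^ k
        * (2 * Cc (j + s₀) n) ≤ 2 * (1 / ((j : ℝ) + 1) ^ 2) := by
      intro j
      set y : ℝ := (((j + s₀) + n : ℕ) : ℝ) with hy
      have hyM : M ≤ y := by
        calc M ≤ (⌈M⌉₊ : ℝ) := Nat.le_ceil M
          _ ≤ y := by rw [hy]; push_cast; linarith [Nat.cast_nonneg (α := ℝ) j, Nat.cast_nonneg (α := ℝ) n, (by simp [hs₀] : (s₀ : ℝ) = ⌈M⌉₊ + 1)]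
      have hyj : (j : ℝ) + 1 ≤ y := by rw [hy]; push_cast; linarith [Nat.cast_nonneg (α := ℝ) ⌈M⌉₊, Nat.cast_nonneg (α := ℝ) n, (by simp [hs₀] : (s₀ : ℝ) = ⌈M⌉₊ + 1)]
      have hypos : (0 : ℝ) < y := by linarith [Nat.cast_nonneg (α := ℝ) j]
      have hfy : 0 < f y := hf.pos _ (Set.mem_Ici.mpr hypos.le)
      have h1 : y ^ (k + n + 2) * f y ≤ 1 := by
        have := hM y hyM
        calc y ^ (k + n + 2) * f y ≤ ‖y ^ (k + n + 2) * f y‖ := le_abs_self _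
          _ ≤ 1 := le_of_lt this
      have h2 : f y * y ^ (k + n) ≤ 1 / y ^ 2 := by
        rw [le_div_iff₀ (by positivity)]
        calc f y * y ^ (k + n) * y ^ 2 = y ^ (k + n + 2) * f y := by ring
          _ ≤ 1 := h1
      have h3 : Cc (j + s₀) n ≤ y ^ n := by
        have := Cc_le (j + s₀) n
        rwa [← hy] at this
      have h4 : ((j + s₀ : ℕ) : ℝ) ^ k ≤ y ^ k := by
        apply pow_le_pow_left₀ (by positivity)
        rw [hy]; push_cast; linarith [Nat.cast_nonneg (α := ℝ) n]
      have h5 : 1 / y ^ 2 ≤ 1 / ((j : ℝ) + 1) ^ 2 := by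
        apply one_div_le_one_div_of_le (by positivity)
        apply pow_le_pow_left₀ (by positivity) hyj
      calc f y * ((j + s₀ : ℕ) : ℝ) ^ k * (2 * Cc (j + s₀) n)
          ≤ f y * y ^ k * (2 * y ^ n) := by
            apply mul_le_mul
            · exact mul_le_mul_of_nonneg_left h4 hfy.le
            · exact mul_le_mul_of_nonneg_left h3 (by norm_num)
            · have := Cc_nonneg (j + s₀) n; linarith
            · positivity
        _ = 2 * (f y * y ^ (k + n)) := by ring
        _ ≤ 2 * (1 / y ^ 2) := by linarith
        _ ≤ 2 * (1 / ((j : ℝ) + 1) ^ 2) := by linarith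
    have hbase : Summable (fun j : ℕ => 2 * (1 / ((j : ℝ) + 1) ^ 2)) := by
      have h0 : Summable (fun m : ℕ => 1 / (m : ℝ) ^ 2) :=
        Real.summable_one_div_nat_pow.mpr (by norm_num)
      have h1 : Summable (fun j : ℕ => 1 / ((j : ℝ) + 1) ^ 2) := by
        have := (summable_nat_add_iff 1).mpr h0
        simpa [Nat.cast_add] using this
      exact h1.mul_left 2
    have hshift : Summable (fun j : ℕ =>
        f (((j + s₀) + n : ℕ) : ℝ) * ((j + s₀ : ℕ) : ℝ) ^ k * (2 * Cc (j + s₀) n)) :=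
      Summable.of_nonneg_of_le (fun j => hu (j + s₀)) hkey hbase
    exact (summable_nat_add_iff s₀).mp hshift
  have hGEsum : ∑' s : ℕ, GE s ≠ ⊤ := by
    rw [hGEdef, ← ENNReal.ofReal_tsum_of_nonneg hu husum]
    exact ENNReal.ofReal_ne_top
  -- tail sums tend to zero
  have htail : Tendsto (fun L : ℕ => ∑' j : ℕ, GE (j + (L + 1 - n))) atTop (nhds 0) := by
    have h1 := ENNReal.tendsto_sum_nat_add GE hGEsum
    have h2 : Tendsto (fun L : ℕ => L + 1 - n) atTop atTop :=
      tendsto_atTop_atTop.mpr fun b => ⟨b + n, fun L hL => by omega⟩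
    exact h1.comp h2
  exact tendsto_of_tendsto_of_tendsto_of_le_of_le tendsto_const_nhds htail
    (fun L => zero_le) hbound


end
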